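/- Let N ≥ 2 be even. The set of tensors T ∈ ℂ² ⊗ (ℂ²)^{⊗4} for which the torus contraction φ(T) ∈ (ℂ²)^{⊗2N} (a copy of T placed at every vertex of the 2×N grid on the torus) has S-flattening of full rank 2^{N−1} — where S consists of the physical factors at the N + 1 vertices given by both vertices of column 1 together with the top-row vertices of columns 2,…,N — is open and dense (in the Euclidean topology) in ℂ² ⊗ (ℂ²)^{⊗4}. -/

import Mathlib

open scoped BigOperators

/-- The contraction map `ψ` of the `2 × N` grid on the torus.  Vertices are pairs
`(r, c) : Fin 2 × Fin N` (`r` the row, `c` the column); each vertex `v` carries a tensor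
`T v ∈ ℂ² ⊗ (ℂ²)^{⊗4}` given in coordinates as `T v b u x d l` where `b` is the physical index
and `u, x, d, l` are the indices of the upper, right, lower and left edges at `v`.
For each column `c` there are two vertical entanglement edges joining `(0,c)` and `(1,c)`:
edge `U c` is the upper edge of `(0,c)` and the lower edge of `(1,c)`, and edge `D c` is the
lower edge of `(0,c)` and the upper edge of `(1,c)`.  For each vertex `(r,c)` the horizontal
entanglement edge `H (r,c)` is the right edge of `(r,c)` and the left edge of `(r, c+1 mod N)`.
The coordinate of `psi N hN T` at a physical multi-index `b` is the sum over all assignments of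
an index in `{1,2}` to every entanglement edge of the product over the vertices of the
corresponding coordinates of the `T v`. -/
noncomputable def psi (N : ℕ) (hN : 2 ≤ N)
    (T : Fin 2 × Fin N → (Fin 2 → Fin 2 → Fin 2 → Fin 2 → Fin 2 → ℂ)) :
    (Fin 2 × Fin N → Fin 2) → ℂ := fun b =>
  ∑ U : Fin N → Fin 2, ∑ D : Fin N → Fin 2, ∑ H : Fin 2 × Fin N → Fin 2,
    ∏ v : Fin 2 × Fin N,
      T v (b v) (if v.1 = 0 then U v.2 else D v.2) (H v)
        (if v.1 = 0 then D v.2 else U v.2) (H (v.1, v.2 - ⟨1, by omega⟩))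

/-- The torus contraction `φ(T)` obtained by placing the single tensor `T ∈ ℂ² ⊗ (ℂ²)^{⊗4}` at
every vertex of the `2 × N` grid on the torus. -/
noncomputable def phi (N : ℕ) (hN : 2 ≤ N)
    (T : Fin 2 → Fin 2 → Fin 2 → Fin 2 → Fin 2 → ℂ) : (Fin 2 × Fin N → Fin 2) → ℂ :=
  psi N hN (fun _ => T)

/-- The `S`-flattening of a tensor `t ∈ (ℂ²)^{⊗2N}` (tensor factors indexed by the vertices of
the `2 × N` torus grid, `t` written in coordinates in the standard basis), as a matrix whose
columns are indexed by the multi-indices of the factors in `S` and whose rows are indexed by the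
multi-indices of the remaining factors; thus `(flat N S t).mulVecLin` is exactly the flattening
map `(⊗_{v∈S} ℂ²)^* → ⊗_{v∉S} ℂ²` in coordinates, and its rank is `(flat N S t).rank`. -/
noncomputable def flat (N : ℕ) (S : Finset (Fin 2 × Fin N))
    (t : (Fin 2 × Fin N → Fin 2) → ℂ) :
    Matrix ({v : Fin 2 × Fin N // v ∉ S} → Fin 2) ({v : Fin 2 × Fin N // v ∈ S} → Fin 2) ℂ :=
  Matrix.of fun b a => t fun v => if h : v ∈ S then a ⟨v, h⟩ else b ⟨v, h⟩

/-- `cpRankLE t r` says the tensor `t ∈ (ℂ²)^{⊗2N}` (factors indexed by the torus grid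
vertices, coordinates in the standard basis) is a sum of `r` rank-one (pure) tensors. -/
def cpRankLE {N : ℕ} (t : (Fin 2 × Fin N → Fin 2) → ℂ) (r : ℕ) : Prop :=
  ∃ w : Fin r → (Fin 2 × Fin N) → Fin 2 → ℂ,
    t = fun x => ∑ j : Fin r, ∏ v : Fin 2 × Fin N, w j v (x v)

set_option synthInstance.maxSize 4000

/-!
Full row rank of a complex matrix `A` is equivalent to `det (A * Aᴴ) ≠ 0`, a continuous
condition on `T`, so the set is open. For density, fix the square minor of the flattening whose
columns copy the bottom-row indices onto the top row. Its determinant is a polynomial in the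
entries of `T`, and at the tensor that puts a Bell pair on every column and trivial horizontal
bonds it is the identity. Restricted to the line from any `T` to that tensor, the determinant is
a nonzero univariate polynomial, so it is nonzero at points of the line arbitrarily close to `T`.
-/

theorem sum_fun_mem {X R ι : Type*} [CommRing R] {S : Subring (X → R)} {s : Finset ι}
    {f : ι → X → R} (h : ∀ i, (fun x => f i x) ∈ S) : (fun x => ∑ i ∈ s, f i x) ∈ S :=
  Finset.sum_fn s f ▸ S.sum_mem fun i _ => h i

theorem prod_fun_mem {X R ι : Type*} [CommRing R] {S : Subring (X → R)} {s : Finset ι}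
    {f : ι → X → R} (h : ∀ i, (fun x => f i x) ∈ S) : (fun x => ∏ i ∈ s, f i x) ∈ S :=
  Finset.prod_fn s f ▸ S.prod_mem fun i _ => h i

namespace Matrix

variable {m n : Type*} [Fintype m] [DecidableEq m]

theorem isUnit_of_rank_eq_card {K : Type*} [Field K] {B : Matrix m m K}
    (h : B.rank = Fintype.card m) : IsUnit B :=
  mulVec_surjective_iff_isUnit.1 <| LinearMap.range_eq_top.1 <|
    Submodule.eq_top_of_finrank_eq <| h.trans (Module.finrank_fintype_fun_eq_card K).symm

theorem rank_eq_card_iff_det_ne_zero {K : Type*} [Field K] (B : Matrix m m K) :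
    B.rank = Fintype.card m ↔ B.det ≠ 0 :=
  ⟨fun h => ((isUnit_iff_isUnit_det B).1 (isUnit_of_rank_eq_card h)).ne_zero,
    rank_of_det_ne_zero⟩

open scoped ComplexOrder in
theorem isOpen_setOf_rank_eq_card_height {𝕜 : Type*} [RCLike 𝕜] [Fintype n] :
    IsOpen {A : Matrix m n 𝕜 | A.rank = Fintype.card m} := by
  have hgram : {A : Matrix m n 𝕜 | A.rank = Fintype.card m} = {A | (A * Aᴴ).det ≠ 0} :=
    Set.ext fun A => by
      rw [Set.mem_ofPred, ← rank_self_mul_conjTranspose, rank_eq_card_iff_det_ne_zero]; rfl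
  rw [hgram]
  exact isOpen_ne_fun (continuous_id.matrix_mul continuous_id.matrix_conjTranspose).matrix_det
    continuous_const

theorem det_mem_of_forall_mem {X R : Type*} [CommRing R] {S : Subring (X → R)}
    {M : X → Matrix m m R} (h : ∀ i j, (fun x => M x i j) ∈ S) : (fun x => (M x).det) ∈ S := by
  simp only [det_apply']
  exact sum_fun_mem fun σ => S.mul_mem (intCast_mem S _) (prod_fun_mem fun i => h _ _)

end Matrix

noncomputable def polynomialMaps (𝕜 : Type*) [CommRing 𝕜] : Subring (𝕜 → 𝕜) :=
  (RingHom.pi fun z : 𝕜 => Polynomial.evalRingHom z).range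

theorem affine_mem_polynomialMaps {𝕜 : Type*} [CommRing 𝕜] (a d : 𝕜) :
    (fun z => a + z * d) ∈ polynomialMaps 𝕜 :=
  ⟨.C a + .X * .C d, funext fun z => by simp [mul_comm d]⟩

theorem dense_setOf_ne_zero_of_polynomial_on_lines {𝕜 V : Type*} [NontriviallyNormedField 𝕜]
    [AddCommGroup V] [Module 𝕜 V] [TopologicalSpace V] [IsTopologicalAddGroup V]
    [ContinuousSMul 𝕜 V] {f : V → 𝕜} {W : V} (hW : f W ≠ 0)
    (hlines : ∀ T, (fun z : 𝕜 => f (T + z • (W - T))) ∈ polynomialMaps 𝕜) :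
    Dense {T | f T ≠ 0} := by
  intro T
  obtain ⟨p, hp⟩ := hlines T
  have hpf : ∀ z, p.eval z = f (T + z • (W - T)) := congrFun hp
  have hp0 : p ≠ 0 := by
    rintro rfl
    exact hW (by simpa using (hpf 1).symm)
  have hnonroots : Dense {z | ¬ p.IsRoot z} := by
    simpa [Set.sdiff_eq_compl_inter, Set.compl_def] using
      dense_univ.sdiff_finite (Polynomial.finite_setOfPred_isRoot hp0)
  have hline : Continuous fun z : 𝕜 => T + z • (W - T) := by fun_prop
  have hT : T ∈ Set.range fun z : 𝕜 => T + z • (W - T) := ⟨0, by simp⟩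
  refine closure_mono ?_ (hline.range_subset_closure_image_dense hnonroots hT)
  rintro _ ⟨z, hz, rfl⟩
  simpa [← hpf] using hz

namespace TorusGrid

variable (N : ℕ) (hN : 2 ≤ N)

def cutSet : Finset (Fin 2 × Fin N) :=
  Finset.univ.filter fun v => v.1 = 0 ∨ v.2 = ⟨0, Nat.zero_lt_of_lt hN⟩

theorem card_compl_cutSet : Fintype.card {v // v ∉ cutSet N hN} = N - 1 := by
  have hcompl : Finset.univ.filter (· ∉ cutSet N hN) =
      ({1} : Finset (Fin 2)) ×ˢ Finset.univ.erase ⟨0, Nat.zero_lt_of_lt hN⟩ := by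
    ext ⟨r, c⟩
    fin_cases r <;> simp [cutSet, eq_comm]
  rw [Fintype.card_subtype, hcompl, Finset.card_product, Finset.card_singleton,
    Finset.card_erase_of_mem (Finset.mem_univ _), Finset.card_univ, Fintype.card_fin, one_mul]

def mirrorToTop (b : {v // v ∉ cutSet N hN} → Fin 2) : {v // v ∈ cutSet N hN} → Fin 2 :=
  fun s => if h : (1, s.1.2) ∉ cutSet N hN then b ⟨(1, s.1.2), h⟩ else 0

def copyTensor : Fin 2 → Fin 2 → Fin 2 → Fin 2 → Fin 2 → ℂ :=
  fun b u x d l => if b = u ∧ u = d ∧ x = 0 ∧ l = 0 then 1 else 0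

theorem phi_copyTensor (b : Fin 2 × Fin N → Fin 2) :
    phi N hN copyTensor b = if ∀ c, b (1, c) = b (0, c) then 1 else 0 := by
  have hsupport : ∀ (U D : Fin N → Fin 2) (H : Fin 2 × Fin N → Fin 2),
      (∀ v : Fin 2 × Fin N, b v = (if v.1 = 0 then U v.2 else D v.2) ∧
        (if v.1 = 0 then U v.2 else D v.2) = (if v.1 = 0 then D v.2 else U v.2) ∧
        H v = 0 ∧ H (v.1, v.2 - ⟨1, by omega⟩) = 0) ↔
      U = (fun c => b (0, c)) ∧ D = (fun c => b (0, c)) ∧ H = 0 ∧ ∀ c, b (1, c) = b (0, c) := by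
    intro U D H
    constructor
    · intro h
      have hcol : ∀ c, b (0, c) = U c ∧ U c = D c ∧ b (1, c) = D c := fun c => by
        have h0 := h (0, c)
        have h1 := h (1, c)
        simp only [if_pos, Fin.one_eq_zero_iff] at h0 h1
        exact ⟨h0.1, h0.2.1, h1.1⟩
      refine ⟨funext fun c => (hcol c).1.symm, funext fun c => ((hcol c).1.trans (hcol c).2.1).symm,
        funext fun v => (h v).2.2.1, fun c => ?_⟩
      exact (hcol c).2.2.trans ((hcol c).1.trans (hcol c).2.1).symm
    · rintro ⟨rfl, rfl, rfl, hb⟩ ⟨r, c⟩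
      fin_cases r <;> simp [hb]
  simp only [phi, psi, copyTensor, Finset.prod_boole, Finset.mem_univ, true_implies, hsupport]
  simp [ite_and, Finset.sum_ite_eq']

theorem flat_phi_copyTensor_submatrix :
    (flat N (cutSet N hN) (phi N hN copyTensor)).submatrix id (mirrorToTop N hN) = 1 := by
  ext b r
  have htop : ∀ c : Fin N, ((0 : Fin 2), c) ∈ cutSet N hN := by simp [cutSet]
  simp only [Matrix.submatrix_apply, flat, Matrix.of_apply, phi_copyTensor, Matrix.one_apply,
    dif_pos (htop _)]
  by_cases hbr : b = r
  · subst hbr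
    rw [if_pos rfl, if_pos]
    intro c
    by_cases h1 : ((1 : Fin 2), c) ∈ cutSet N hN <;> simp [h1, mirrorToTop]
  · obtain ⟨⟨⟨i, c⟩, hic⟩, hne⟩ := Function.ne_iff.1 hbr
    have hi : i = 1 := by
      fin_cases i
      · exact absurd (htop c) hic
      · rfl
    subst hi
    rw [if_neg hbr, if_neg]
    exact not_forall.2 ⟨c, by simpa [hic, mirrorToTop] using hne⟩

theorem rank_flat_eq_of_det_submatrix_ne_zero {t : (Fin 2 × Fin N → Fin 2) → ℂ}
    (h : ((flat N (cutSet N hN) t).submatrix id (mirrorToTop N hN)).det ≠ 0) :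
    (flat N (cutSet N hN) t).rank = Fintype.card ({v // v ∉ cutSet N hN} → Fin 2) :=
  le_antisymm (Matrix.rank_le_card_height _)
    ((Matrix.rank_of_det_ne_zero h).symm.trans_le (Matrix.rank_submatrix_le _ _ _))

theorem continuous_flat_phi : Continuous fun T => flat N (cutSet N hN) (phi N hN T) := by
  refine continuous_matrix fun b a => ?_
  simp only [flat, phi, psi, Matrix.of_apply]
  fun_prop

theorem phi_mem_polynomialMaps_on_lines (T D : Fin 2 → Fin 2 → Fin 2 → Fin 2 → Fin 2 → ℂ)
    (b : Fin 2 × Fin N → Fin 2) : (fun z : ℂ => phi N hN (T + z • D) b) ∈ polynomialMaps ℂ := by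
  unfold phi psi
  refine sum_fun_mem fun U => sum_fun_mem fun D' => sum_fun_mem fun H => prod_fun_mem fun v => ?_
  exact affine_mem_polynomialMaps _ _

noncomputable def flatMinor (T : Fin 2 → Fin 2 → Fin 2 → Fin 2 → Fin 2 → ℂ) : ℂ :=
  ((flat N (cutSet N hN) (phi N hN T)).submatrix id (mirrorToTop N hN)).det

theorem flatMinor_copyTensor : flatMinor N hN copyTensor = 1 := by
  rw [flatMinor, flat_phi_copyTensor_submatrix, Matrix.det_one]

theorem flatMinor_mem_polynomialMaps_on_lines (T D : Fin 2 → Fin 2 → Fin 2 → Fin 2 → Fin 2 → ℂ) :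
    (fun z : ℂ => flatMinor N hN (T + z • D)) ∈ polynomialMaps ℂ :=
  Matrix.det_mem_of_forall_mem fun _ _ => phi_mem_polynomialMaps_on_lines N hN T D _

end TorusGrid

/-- The set of tensors `T ∈ ℂ² ⊗ (ℂ²)^{⊗4}` for which the torus contraction
`φ(T) ∈ (ℂ²)^{⊗2N}` has `S`-flattening of full rank `2^{N-1}` — where `S` consists of the
physical factors at the `N + 1` vertices given by both vertices of column `1` (column index `0`)
together with the top-row vertices of the other columns — is open and dense (Euclidean
topology) in `ℂ² ⊗ (ℂ²)^{⊗4}`. -/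
theorem stmt8 (N : ℕ) (hN : 2 ≤ N) :
    IsOpen {T : Fin 2 → Fin 2 → Fin 2 → Fin 2 → Fin 2 → ℂ |
        (flat N (Finset.univ.filter fun v => v.1 = 0 ∨ v.2 = ⟨0, by omega⟩)
          (phi N hN T)).rank = 2 ^ (N - 1)} ∧
      Dense {T : Fin 2 → Fin 2 → Fin 2 → Fin 2 → Fin 2 → ℂ |
        (flat N (Finset.univ.filter fun v => v.1 = 0 ∨ v.2 = ⟨0, by omega⟩)
          (phi N hN T)).rank = 2 ^ (N - 1)} := by
  have hcard : 2 ^ (N - 1) = Fintype.card ({v // v ∉ TorusGrid.cutSet N hN} → Fin 2) := by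
    rw [Fintype.card_fun, TorusGrid.card_compl_cutSet, Fintype.card_fin]
  rw [hcard]
  refine ⟨Matrix.isOpen_setOf_rank_eq_card_height.preimage (TorusGrid.continuous_flat_phi N hN), ?_⟩
  have hW : TorusGrid.flatMinor N hN TorusGrid.copyTensor ≠ 0 := by
    rw [TorusGrid.flatMinor_copyTensor]
    exact one_ne_zero
  exact (dense_setOf_ne_zero_of_polynomial_on_lines hW
    (TorusGrid.flatMinor_mem_polynomialMaps_on_lines N hN · _)).mono fun T hT =>
      TorusGrid.rank_flat_eq_of_det_submatrix_ne_zero N hN hT
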